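/- arXiv:1406.5140 — 2 statements merged into one kernel-verified Lean document; each statement's English description precedes it below -/
import Mathlib

section
/- Let p be a prime not dividing m+1, let n ≥ 1, and for each s = 1,...,n let F_s(z) = (∑_j a^{(s)}_j z_j)/(∑_j b^{(s)}_j z_j) with a^{(s)}, b^{(s)} ∈ E_p^{m+1}. Then for sequences z^{(1)},...,z^{(n)} and t^{(1)},...,t^{(n)} in E_p^{m+1}: |∏_{s=1}^n F_s(z^{(s)}) - ∏_{s=1}^n F_s(t^{(s)})|_p ≤ (1/p) max_{1≤s≤n} max_j |z^{(s)}_j - t^{(s)}_j|_p. -/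
/-- `x ∈ E_p` : a unit with `|x - 1|_p < p^(-1/(p-1))`. -/
def IsEp (p : ℕ) [Fact p.Prime] (x : ℚ_[p]) : Prop :=
  ‖x‖ = 1 ∧ ‖x - 1‖ < (p : ℝ) ^ (-(1 : ℝ) / ((p : ℝ) - 1))

/-!
Each numerator and denominator is a sum of `m + 1` terms congruent to `1` modulo `p`, hence a
`p`-adic unit because `p ∤ m + 1`. Cross-multiplying, the difference `F_s(z) - F_s(t)` becomes
`∑_{j,k} (a_j b_k - 1)(z_j t_k - t_j z_k)` over a unit, and each term has norm at most
`p⁻¹ · max_j |z_j - t_j|`. The ultrametric inequality carries this bound through the product,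
since every factor has norm `1`.
-/

open Finset IsUltrametricDist

theorem Finset.sum_mul_sum_sub_sum_mul_sum {R ι : Type*} [CommRing R] (s : Finset ι)
    (a b z t : ι → R) :
    (∑ j ∈ s, a j * z j) * (∑ k ∈ s, b k * t k) - (∑ k ∈ s, b k * z k) * (∑ j ∈ s, a j * t j) =
      ∑ j ∈ s, ∑ k ∈ s, (a j * b k - 1) * (z j * t k - t j * z k) := by
  calc _ = ∑ j ∈ s, ∑ k ∈ s, (a j * z j * (b k * t k) - a j * t j * (b k * z k)
          - (z j * t k - t j * z k)) := by
        simp only [sum_sub_distrib, ← sum_mul_sum]; ring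
    _ = _ := sum_congr rfl fun _ _ => sum_congr rfl fun _ _ => by ring

section Ultrametric

lemma norm_mul_sub_mul_le_max {R : Type*} [NormedRing R] [IsUltrametricDist R] {x y x' y' : R}
    (hy : ‖y‖ ≤ 1) (hx' : ‖x'‖ ≤ 1) : ‖x * y - x' * y'‖ ≤ max ‖x - x'‖ ‖y - y'‖ := by
  have h₁ : ‖(x - x') * y‖ ≤ ‖x - x'‖ :=
    (norm_mul_le _ _).trans (mul_le_of_le_one_right (norm_nonneg _) hy)
  have h₂ : ‖x' * (y - y')‖ ≤ ‖y - y'‖ :=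
    (norm_mul_le _ _).trans (mul_le_of_le_one_left (norm_nonneg _) hx')
  calc ‖x * y - x' * y'‖ = ‖(x - x') * y + x' * (y - y')‖ := by congr 1; noncomm_ring
    _ ≤ max ‖x - x'‖ ‖y - y'‖ := (norm_add_le_max _ _).trans (max_le_max h₁ h₂)

lemma norm_mul_sub_one_le_max {R : Type*} [NormedRing R] [NormOneClass R] [IsUltrametricDist R]
    {x y : R} (hy : ‖y‖ ≤ 1) : ‖x * y - 1‖ ≤ max ‖x - 1‖ ‖y - 1‖ := by
  simpa using norm_mul_sub_mul_le_max (x' := (1 : R)) (y' := 1) hy norm_one.le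

lemma norm_prod_sub_prod_le {R ι : Type*} [NormedCommRing R] [NormOneClass R]
    [IsUltrametricDist R] {s : Finset ι} {x y : ι → R} {C : ℝ} (hC : 0 ≤ C)
    (hx : ∀ i ∈ s, ‖x i‖ ≤ 1) (hy : ∀ i ∈ s, ‖y i‖ ≤ 1) (hxy : ∀ i ∈ s, ‖x i - y i‖ ≤ C) :
    ‖∏ i ∈ s, x i - ∏ i ∈ s, y i‖ ≤ C := by
  classical
  induction s using Finset.induction_on with
  | empty => simpa using hC
  | insert i s hi ih =>
    simp only [forall_mem_insert] at hx hy hxy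
    have hprod : ‖∏ j ∈ s, x j‖ ≤ 1 :=
      (Finset.norm_prod_le _ _).trans (prod_le_one (fun _ _ => norm_nonneg _) hx.2)
    rw [prod_insert hi, prod_insert hi]
    exact (norm_mul_sub_mul_le_max hprod hy.1).trans
      (max_le hxy.1 (ih hx.2 hy.2 hxy.2))

variable {K : Type*} [NormedField K] [IsUltrametricDist K]

lemma norm_sum_eq_one_of_norm_sub_one_lt {ι : Type*} [Fintype ι] [Nonempty ι] {x : ι → K}
    (hcard : ‖(Fintype.card ι : K)‖ = 1) (hx : ∀ i, ‖x i - 1‖ < 1) : ‖∑ i, x i‖ = 1 := by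
  obtain ⟨i, -, hi⟩ := exists_norm_finsetSum_le univ fun i => x i - 1
  have hsmall : ‖∑ i, (x i - 1)‖ < ‖(Fintype.card ι : K)‖ := hcard ▸ hi.trans_lt (hx i)
  have hsplit : ∑ i, x i = (Fintype.card ι : K) + ∑ i, (x i - 1) := by
    simp [sum_sub_distrib]
  rw [hsplit, norm_add_eq_max_of_norm_ne_norm hsmall.ne', max_eq_left hsmall.le, hcard]

lemma norm_div_sub_div_le {ι : Type*} [Fintype ι] {a b z t : ι → K} {ε δ : ℝ}
    (hε : 0 ≤ ε) (hδ : 0 ≤ δ) (hab : ∀ j k, ‖a j * b k - 1‖ ≤ ε) (ht : ∀ j, ‖t j‖ ≤ 1)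
    (hzt : ∀ j, ‖z j - t j‖ ≤ δ) (hbz : ‖∑ j, b j * z j‖ = 1) (hbt : ‖∑ j, b j * t j‖ = 1) :
    ‖(∑ j, a j * z j) / (∑ j, b j * z j) - (∑ j, a j * t j) / (∑ j, b j * t j)‖ ≤ ε * δ := by
  have hcross : ∀ j k, ‖z j * t k - t j * z k‖ ≤ δ := fun j k =>
    (norm_mul_sub_mul_le_max (ht k) (ht j)).trans
      (max_le (hzt j) (by rw [norm_sub_rev]; exact hzt k))
  have hterm : ∀ j k, ‖(a j * b k - 1) * (z j * t k - t j * z k)‖ ≤ ε * δ := fun j k => by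
    rw [norm_mul]; exact mul_le_mul (hab j k) (hcross j k) (norm_nonneg _) hε
  rw [div_sub_div _ _ (norm_ne_zero_iff.mp (hbz ▸ one_ne_zero))
      (norm_ne_zero_iff.mp (hbt ▸ one_ne_zero)), norm_div, norm_mul, hbz, hbt, mul_one, div_one,
    sum_mul_sum_sub_sum_mul_sum]
  exact norm_sum_le_of_forall_le_of_nonneg (by positivity) fun j _ =>
    norm_sum_le_of_forall_le_of_nonneg (by positivity) fun k _ => hterm j k

end Ultrametric

section Padic

variable {p : ℕ} [Fact p.Prime]

lemma Padic.norm_le_inv_of_norm_lt_one {x : ℚ_[p]} (hx : ‖x‖ < 1) : ‖x‖ ≤ (p : ℝ)⁻¹ := by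
  simpa using (Padic.norm_le_pow_iff_norm_lt_pow_add_one x (-1)).mpr (by simpa using hx)

lemma IsEp.norm_sub_one_lt_one {x : ℚ_[p]} (hx : IsEp p x) : ‖x - 1‖ < 1 := by
  have hp : (1 : ℝ) < p := by exact_mod_cast (Fact.out : p.Prime).one_lt
  refine hx.2.trans (Real.rpow_lt_one_of_one_lt_of_neg hp ?_)
  exact div_neg_of_neg_of_pos (by norm_num) (by linarith)

lemma IsEp.norm_mul_sub_one_le {x y : ℚ_[p]} (hx : IsEp p x) (hy : IsEp p y) :
    ‖x * y - 1‖ ≤ (p : ℝ)⁻¹ :=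
  (norm_mul_sub_one_le_max hy.1.le).trans <| max_le
    (Padic.norm_le_inv_of_norm_lt_one hx.norm_sub_one_lt_one)
    (Padic.norm_le_inv_of_norm_lt_one hy.norm_sub_one_lt_one)

lemma IsEp.norm_sum_mul_eq_one {m : ℕ} (hpm : ¬ p ∣ (m + 1)) {x y : Fin (m + 1) → ℚ_[p]}
    (hx : ∀ j, IsEp p (x j)) (hy : ∀ j, IsEp p (y j)) : ‖∑ j, x j * y j‖ = 1 := by
  have hcard : ‖(Fintype.card (Fin (m + 1)) : ℚ_[p])‖ = 1 := by
    rw [Fintype.card_fin, Padic.norm_natCast_eq_one_iff,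
      Nat.Prime.coprime_iff_not_dvd Fact.out]
    exact hpm
  refine norm_sum_eq_one_of_norm_sub_one_lt hcard fun j => ?_
  exact ((hx j).norm_mul_sub_one_le (hy j)).trans_lt
    (inv_lt_one_of_one_lt₀ (by exact_mod_cast (Fact.out : p.Prime).one_lt))

end Padic

theorem prod_F_contraction (p : ℕ) [Fact p.Prime] (m : ℕ) (hpm : ¬ p ∣ (m + 1))
    (n : ℕ) [NeZero n]
    (a b : Fin n → Fin (m + 1) → ℚ_[p])
    (ha : ∀ s j, IsEp p (a s j)) (hb : ∀ s j, IsEp p (b s j))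
    (z t : Fin n → Fin (m + 1) → ℚ_[p])
    (hz : ∀ s j, IsEp p (z s j)) (ht : ∀ s j, IsEp p (t s j)) :
    ‖(∏ s, (∑ j, a s j * z s j) / (∑ j, b s j * z s j)) -
      (∏ s, (∑ j, a s j * t s j) / (∑ j, b s j * t s j))‖ ≤
      (1 / p) * (Finset.univ.sup' Finset.univ_nonempty fun s : Fin n =>
        Finset.univ.sup' Finset.univ_nonempty fun j => ‖z s j - t s j‖) := by
  set Δ := Finset.univ.sup' Finset.univ_nonempty fun s : Fin n =>
    Finset.univ.sup' Finset.univ_nonempty fun j => ‖z s j - t s j‖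
  have hΔ : ∀ s j, ‖z s j - t s j‖ ≤ Δ := fun s j =>
    (le_sup' (fun j => ‖z s j - t s j‖) (mem_univ j)).trans
      (le_sup' (fun s => univ.sup' univ_nonempty fun j => ‖z s j - t s j‖) (mem_univ s))
  have hΔ₀ : 0 ≤ Δ := (norm_nonneg _).trans (hΔ 0 0)
  have hF : ∀ (w : Fin n → Fin (m + 1) → ℚ_[p]), (∀ s j, IsEp p (w s j)) →
      ∀ s, ‖(∑ j, a s j * w s j) / (∑ j, b s j * w s j)‖ ≤ 1 := fun w hw s => by
    rw [norm_div, IsEp.norm_sum_mul_eq_one hpm (ha s) (hw s),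
      IsEp.norm_sum_mul_eq_one hpm (hb s) (hw s), div_one]
  rw [one_div]
  refine norm_prod_sub_prod_le (by positivity) (fun s _ => hF z hz s) (fun s _ => hF t ht s)
    fun s _ => ?_
  exact norm_div_sub_div_le (by positivity) hΔ₀ (fun j k => (ha s j).norm_mul_sub_one_le (hb s k))
    (fun j => (ht s j).1.le) (hΔ s) (IsEp.norm_sum_mul_eq_one hpm (hb s) (hz s))
    (IsEp.norm_sum_mul_eq_one hpm (hb s) (ht s))
end

section
/- Let p be a prime with p ∤ (m+1), k ≥ 1. Define F_i : E_p^m → ℚ_p for i = 0,...,m-1 by F_i(z) = (∑_{j=0}^{m-1} θ^{|i-j|} z_j + θ^{m-i})/(∑_{j=0}^{m-1} θ^{m-j} z_j + 1), where θ ∈ E_p and |i-j| is the usual absolute value of the integer i-j. Then the map G : E_p^m → E_p^m, G(z)_i = (F_i(z))^k, has a unique fixed point in E_p^m. -/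
open Set NNReal IsUltrametricDist

theorem existsUnique_fixedPt_of_mapsTo {α : Type*} [MetricSpace α] {f : α → α}
    {s t u : Set α} {K : ℝ≥0} (hK : K < 1) (htc : IsComplete t) (htne : t.Nonempty)
    (htu : t ⊆ u) (hus : u ⊆ s) (hf : MapsTo f s t) (hlip : LipschitzOnWith K f t) :
    ∃! x, x ∈ u ∧ f x = x := by
  have hft : MapsTo f t t := hf.mono_left (htu.trans hus)
  obtain ⟨x₀, hx₀⟩ := htne
  obtain ⟨x, hxt, hfx, -⟩ := ContractingWith.exists_fixedPoint' htc hft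
    ⟨hK, hlip.mapsToRestrict hft⟩ hx₀ (edist_ne_top _ _)
  refine ⟨x, ⟨htu hxt, hfx⟩, fun y ⟨hyu, hfy⟩ => ?_⟩
  have hyt : y ∈ t := hfy ▸ hf (hus hyu)
  have hdist : dist y x ≤ K * dist y x := by
    simpa only [hfx.eq, hfy] using hlip.dist_le_mul y hyt x hxt
  have hK' : (K : ℝ) < 1 := hK
  exact dist_le_zero.mp (by nlinarith [dist_nonneg (x := y) (y := x)])

section Ultrametric

theorem norm_sum_lt_of_forall_lt {ι M : Type*} [SeminormedAddCommGroup M] [IsUltrametricDist M]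
    {s : Finset ι} {f : ι → M} {C : ℝ} (hC : 0 < C) (h : ∀ i ∈ s, ‖f i‖ < C) :
    ‖∑ i ∈ s, f i‖ < C := by
  rcases s.eq_empty_or_nonempty with rfl | hs
  · simpa using hC
  obtain ⟨i, hi, hle⟩ := exists_norm_finsetSum_le_of_nonempty hs f
  exact hle.trans_lt (h i hi)

theorem norm_eq_of_norm_sub_lt {E : Type*} [SeminormedAddGroup E] [IsUltrametricDist E] {x y : E}
    (h : ‖x - y‖ < ‖y‖) : ‖x‖ = ‖y‖ := by
  rw [← sub_add_cancel x y, norm_add_eq_max_of_norm_ne_norm h.ne, max_eq_right h.le]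

theorem norm_sub_le_max_norm_sub {E : Type*} [SeminormedAddGroup E] [IsUltrametricDist E]
    (x y c : E) : ‖x - y‖ ≤ max ‖x - c‖ ‖y - c‖ := by
  simpa only [sub_add_sub_cancel, norm_sub_rev c y] using norm_add_le_max (x - c) (c - y)

theorem norm_mul_sub_one_le {R : Type*} [SeminormedRing R] [IsUltrametricDist R] {x y : R}
    (hx : ‖x‖ ≤ 1) : ‖x * y - 1‖ ≤ max ‖x - 1‖ ‖y - 1‖ := by
  calc ‖x * y - 1‖ = ‖x * (y - 1) + (x - 1)‖ := by noncomm_ring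
    _ ≤ max ‖y - 1‖ ‖x - 1‖ := by
      refine (norm_add_le_max _ _).trans (max_le_max_right _ ?_)
      exact (norm_mul_le _ _).trans (mul_le_of_le_one_left (norm_nonneg _) hx)
    _ = max ‖x - 1‖ ‖y - 1‖ := max_comm _ _

variable {𝕜 : Type*} [NormedField 𝕜] [IsUltrametricDist 𝕜]

theorem norm_eq_one_of_norm_sub_one_lt {x : 𝕜} (h : ‖x - 1‖ < 1) : ‖x‖ = 1 :=
  norm_one (α := 𝕜) ▸ norm_eq_of_norm_sub_lt (h.trans_eq norm_one.symm)

theorem norm_pow_sub_pow_le {x y : 𝕜} (hx : ‖x‖ ≤ 1) (hy : ‖y‖ ≤ 1) (n : ℕ) :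
    ‖x ^ n - y ^ n‖ ≤ ‖x - y‖ := by
  rw [← geom_sum₂_mul, norm_mul]
  refine mul_le_of_le_one_left (norm_nonneg _) (norm_sum_le_of_forall_le_of_nonneg zero_le_one
    fun i _ => ?_)
  rw [norm_mul, norm_pow, norm_pow]
  exact mul_le_one₀ (pow_le_one₀ (norm_nonneg _) hx) (by positivity)
    (pow_le_one₀ (norm_nonneg _) hy)

theorem norm_pow_sub_one_le {x : 𝕜} (hx : ‖x‖ ≤ 1) (n : ℕ) : ‖x ^ n - 1‖ ≤ ‖x - 1‖ := by
  simpa using norm_pow_sub_pow_le hx norm_one.le n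

end Ultrametric

section LinFrac

variable {𝕜 ι : Type*} [NormedField 𝕜] [IsUltrametricDist 𝕜] [Fintype ι]

def linFrac (a b : ι → 𝕜) (c : 𝕜) (z : ι → 𝕜) : 𝕜 :=
  (∑ j, a j * z j + c) / (∑ j, b j * z j + 1)

variable {a b : ι → 𝕜} {c : 𝕜} {z w : ι → 𝕜} {ε : ℝ≥0}

theorem norm_sum_mul_add_one_eq_one (hcard : ‖(Fintype.card ι + 1 : 𝕜)‖ = 1)
    (hb : ∀ j, ‖b j - 1‖ < 1) (hz : ∀ j, ‖z j - 1‖ < 1) : ‖∑ j, b j * z j + 1‖ = 1 := by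
  refine hcard ▸ norm_eq_of_norm_sub_lt (hcard ▸ ?_)
  have hsum : ∑ j, b j * z j + 1 - (Fintype.card ι + 1 : 𝕜) = ∑ j, (b j * z j - 1) := by
    simp only [Finset.sum_sub_distrib, Finset.sum_const, Finset.card_univ, nsmul_eq_mul, mul_one]
    ring
  rw [hsum]
  refine norm_sum_lt_of_forall_lt one_pos fun j _ => ?_
  exact (norm_mul_sub_one_le (norm_eq_one_of_norm_sub_one_lt (hb j)).le).trans_lt
    (max_lt (hb j) (hz j))

section Bounds

variable (hcard : ‖(Fintype.card ι + 1 : 𝕜)‖ = 1) (hε : ε < 1) (ha : ∀ j, ‖a j - 1‖ ≤ ε)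
  (hb : ∀ j, ‖b j - 1‖ ≤ ε) (hc : ‖c - 1‖ ≤ ε)
include hcard hε ha hb hc

theorem norm_linFrac_sub_one_le (hz : ∀ j, ‖z j - 1‖ < 1) : ‖linFrac a b c z - 1‖ ≤ ε := by
  have hD := norm_sum_mul_add_one_eq_one hcard (fun j => (hb j).trans_lt hε) hz
  have hD0 : ∑ j, b j * z j + 1 ≠ 0 := norm_ne_zero_iff.mp (hD ▸ one_ne_zero)
  have hsub : linFrac a b c z - 1 =
      (∑ j, (a j - b j) * z j + (c - 1)) / (∑ j, b j * z j + 1) := by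
    rw [linFrac, div_sub_one hD0]
    simp only [sub_mul, Finset.sum_sub_distrib]
    ring
  rw [hsub, norm_div, hD, div_one]
  refine (norm_add_le_max _ _).trans (max_le ?_ hc)
  refine norm_sum_le_of_forall_le_of_nonneg ε.2 fun j _ => ?_
  rw [norm_mul, norm_eq_one_of_norm_sub_one_lt (hz j), mul_one]
  exact (norm_sub_le_max_norm_sub _ _ 1).trans (max_le (ha j) (hb j))

theorem norm_linFrac_eq_one (hz : ∀ j, ‖z j - 1‖ < 1) : ‖linFrac a b c z‖ = 1 :=
  norm_eq_one_of_norm_sub_one_lt ((norm_linFrac_sub_one_le hcard hε ha hb hc hz).trans_lt hε)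

theorem norm_linFrac_sub_linFrac_le (hz : ∀ j, ‖z j - 1‖ < 1) (hw : ∀ j, ‖w j - 1‖ < 1) :
    ‖linFrac a b c z - linFrac a b c w‖ ≤ ε * ‖z - w‖ := by
  set F := linFrac a b c w
  have hDz := norm_sum_mul_add_one_eq_one hcard (fun j => (hb j).trans_lt hε) hz
  have hDz0 : ∑ j, b j * z j + 1 ≠ 0 := norm_ne_zero_iff.mp (hDz ▸ one_ne_zero)
  have hDw0 : ∑ j, b j * w j + 1 ≠ 0 := norm_ne_zero_iff.mp
    (norm_sum_mul_add_one_eq_one hcard (fun j => (hb j).trans_lt hε) hw ▸ one_ne_zero)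
  have hNw : ∑ j, a j * w j + c = F * (∑ j, b j * w j + 1) := (div_mul_cancel₀ _ hDw0).symm
  have hsub : linFrac a b c z - F =
      (∑ j, (a j - F * b j) * (z j - w j)) / (∑ j, b j * z j + 1) := by
    rw [eq_div_iff hDz0, sub_mul, linFrac, div_mul_cancel₀ _ hDz0]
    simp only [sub_mul, mul_sub, Finset.sum_sub_distrib, mul_assoc, ← Finset.mul_sum]
    linear_combination hNw
  rw [hsub, norm_div, hDz, div_one]
  refine norm_sum_le_of_forall_le_of_nonneg (by positivity) fun j _ => ?_
  rw [norm_mul]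
  refine mul_le_mul ?_ (norm_le_pi_norm (z - w) j) (norm_nonneg _) ε.2
  refine (norm_sub_le_max_norm_sub _ _ 1).trans (max_le (ha j) ?_)
  exact (norm_mul_sub_one_le (norm_linFrac_eq_one hcard hε ha hb hc hw).le).trans
    (max_le (norm_linFrac_sub_one_le hcard hε ha hb hc hw) (hb j))

end Bounds

variable {a : ι → ι → 𝕜} {c : ι → 𝕜}

section Pow

variable (hcard : ‖(Fintype.card ι + 1 : 𝕜)‖ = 1) (hε : ε < 1) (ha : ∀ i j, ‖a i j - 1‖ ≤ ε)
  (hb : ∀ j, ‖b j - 1‖ ≤ ε) (hc : ∀ i, ‖c i - 1‖ ≤ ε) (k : ℕ)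
include hcard hε ha hb hc

theorem mapsTo_linFrac_pow :
    MapsTo (fun z i => linFrac (a i) b (c i) z ^ k) {z | ∀ j, ‖z j - 1‖ < 1}
      (Metric.closedBall 1 ε) := fun z hz => by
  rw [Metric.mem_closedBall, dist_eq_norm]
  refine (pi_norm_le_iff_of_nonneg ε.2).mpr fun i => ?_
  exact (norm_pow_sub_one_le (norm_linFrac_eq_one hcard hε (ha i) hb (hc i) hz).le k).trans
    (norm_linFrac_sub_one_le hcard hε (ha i) hb (hc i) hz)

theorem lipschitzOnWith_linFrac_pow :
    LipschitzOnWith ε (fun z i => linFrac (a i) b (c i) z ^ k) {z | ∀ j, ‖z j - 1‖ < 1} := by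
  refine LipschitzOnWith.of_dist_le_mul fun z hz w hw => ?_
  refine (dist_pi_le_iff (by positivity)).mpr fun i => ?_
  rw [dist_eq_norm, dist_eq_norm]
  exact (norm_pow_sub_pow_le (norm_linFrac_eq_one hcard hε (ha i) hb (hc i) hz).le
    (norm_linFrac_eq_one hcard hε (ha i) hb (hc i) hw).le k).trans
    (norm_linFrac_sub_linFrac_le hcard hε (ha i) hb (hc i) hz hw)

theorem existsUnique_fixedPt_linFrac_pow [CompleteSpace 𝕜] {u : Set (ι → 𝕜)}
    (hball : Metric.closedBall 1 ε ⊆ u) (hu : u ⊆ {z | ∀ j, ‖z j - 1‖ < 1}) :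
    ∃! z, z ∈ u ∧ (fun i => linFrac (a i) b (c i) z ^ k) = z :=
  existsUnique_fixedPt_of_mapsTo hε Metric.isClosed_closedBall.isComplete
    ⟨1, Metric.mem_closedBall_self ε.2⟩ hball hu (mapsTo_linFrac_pow hcard hε ha hb hc k)
    ((lipschitzOnWith_linFrac_pow hcard hε ha hb hc k).mono (hball.trans hu))

end Pow

end LinFrac

theorem unique_ti_solution_general (p : ℕ) [Fact p.Prime] (m : ℕ)
    (hpm : ¬ p ∣ (m + 1)) (k : ℕ) (θ : ℚ_[p]) (hθ : IsEp p θ) :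
    ∃! z : Fin m → ℚ_[p], (∀ i, IsEp p (z i)) ∧
      ∀ i : Fin m, z i =
        (((∑ j : Fin m, θ ^ ((i : ℤ) - (j : ℤ)).natAbs * z j) + θ ^ (m - (i : ℕ))) /
          ((∑ j : Fin m, θ ^ (m - (j : ℕ)) * z j) + 1)) ^ k := by
  set r : ℝ := (p : ℝ) ^ (-(1 : ℝ) / ((p : ℝ) - 1))
  have hp : (1 : ℝ) < p := by exact_mod_cast (Fact.out : p.Prime).one_lt
  have hr : r < 1 :=
    Real.rpow_lt_one_of_one_lt_of_neg hp (div_neg_of_neg_of_pos (by norm_num) (by linarith))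
  have hε : ‖θ - 1‖₊ < 1 := by exact_mod_cast hθ.2.trans hr
  have hpow (n : ℕ) : ‖θ ^ n - 1‖ ≤ ‖θ - 1‖₊ := norm_pow_sub_one_le hθ.1.le n
  have hcard : ‖(Fintype.card (Fin m) + 1 : ℚ_[p])‖ = 1 := by
    simpa using
      Padic.norm_natCast_eq_one_iff.mpr ((Nat.Prime.coprime_iff_not_dvd Fact.out).mpr hpm)
  have hball : Metric.closedBall 1 ‖θ - 1‖₊ ⊆ {z : Fin m → ℚ_[p] | ∀ i, IsEp p (z i)} := by
    intro z hz i
    rw [Metric.mem_closedBall, dist_eq_norm] at hz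
    have hzi : ‖z i - 1‖ ≤ ‖θ - 1‖ := (pi_norm_le_iff_of_nonneg (NNReal.coe_nonneg _)).mp hz i
    exact ⟨norm_eq_one_of_norm_sub_one_lt (hzi.trans_lt (hθ.2.trans hr)), hzi.trans_lt hθ.2⟩
  have hEp : {z : Fin m → ℚ_[p] | ∀ i, IsEp p (z i)} ⊆ {z | ∀ j, ‖z j - 1‖ < 1} :=
    fun z hz j => (hz j).2.trans hr
  have key := existsUnique_fixedPt_linFrac_pow (a := fun i j : Fin m => θ ^ ((i : ℤ) - j).natAbs)
    (b := fun j : Fin m => θ ^ (m - (j : ℕ))) (c := fun i : Fin m => θ ^ (m - (i : ℕ)))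
    hcard hε (fun _ _ => hpow _) (fun _ => hpow _) (fun _ => hpow _) k hball hEp
  simpa only [Set.mem_ofPred_eq, funext_iff, linFrac, eq_comm] using key

theorem unique_ti_solution (p : ℕ) [Fact p.Prime] (m : ℕ) (hm : 1 ≤ m)
    (hpm : ¬ p ∣ (m + 1)) (k : ℕ) (hk : 1 ≤ k) (θ : ℚ_[p]) (hθ : IsEp p θ) :
    ∃! z : Fin m → ℚ_[p], (∀ i, IsEp p (z i)) ∧
      ∀ i : Fin m, z i =
        (((∑ j : Fin m, θ ^ ((i : ℤ) - (j : ℤ)).natAbs * z j) + θ ^ (m - (i : ℕ))) /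
          ((∑ j : Fin m, θ ^ (m - (j : ℕ)) * z j) + 1)) ^ k :=
  unique_ti_solution_general p m hpm k θ hθ
end
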